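/- arXiv:2310.12283 — 4 statements merged into one kernel-verified Lean document; each statement's English description precedes it below -/
import Mathlib

section
/- If G' is obtained from a 4-connected graph G by a 4-split of a vertex v, then G' is 4-connected. -/
/-- `K₃,₃ + v`: `K₃,₃` with parts `{0,1,2}`, `{3,4,5}`, plus a new vertex `6`
adjacent to the 4-cycle `0,3,1,4`. -/
def K33v : SimpleGraph (Fin 7) :=
  SimpleGraph.fromEdgeSet
    {s(0,3), s(0,4), s(0,5), s(1,3), s(1,4), s(1,5), s(2,3), s(2,4), s(2,5),
     s(6,0), s(6,3), s(6,1), s(6,4)}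

/-- A graph is 4-connected if it has at least 5 vertices and deleting any
set of at most 3 vertices leaves it connected. -/
def FourConnected {V : Type*} (G : SimpleGraph V) : Prop :=
  5 ≤ Nat.card V ∧
  ∀ S : Set V, S.Finite → S.ncard ≤ 3 → (G.induce Sᶜ).Connected

/-- `H` is a minor of `G`: there are nonempty, pairwise disjoint, connected
branch sets in `G`, one for each vertex of `H`, with an edge of `G` between
the branch sets of every pair of adjacent vertices of `H`. -/
def IsMinor {α β : Type*} (H : SimpleGraph α) (G : SimpleGraph β) : Prop :=
  ∃ φ : α → Set β,
    (∀ x, (φ x).Nonempty) ∧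
    (∀ x, (G.induce (φ x)).Connected) ∧
    (Pairwise fun x y => Disjoint (φ x) (φ y)) ∧
    ∀ x y, H.Adj x y → ∃ u ∈ φ x, ∃ w ∈ φ y, G.Adj u w

/-- The double wheel `DW n`: a cycle on `Fin n` plus two adjacent hubs
joined to all cycle vertices. -/
def DW (n : ℕ) : SimpleGraph (Fin n ⊕ Fin 2) :=
  SimpleGraph.fromRel fun u v =>
    match u, v with
    | Sum.inl i, Sum.inl j => (i.val + 1) % n = j.val
    | Sum.inl _, Sum.inr _ => True
    | Sum.inr _, Sum.inl _ => True
    | Sum.inr _, Sum.inr _ => True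

/-- The square of the `n`-cycle: `i ~ j` iff `i - j ≡ ±1, ±2 (mod n)`. -/
def CycleSq (n : ℕ) : SimpleGraph (ZMod n) :=
  SimpleGraph.fromRel fun i j => i - j = 1 ∨ i - j = 2

/-- `G'` is obtained from `G` by the 4-split of `v` with sets `A`, `B`:
`A ∪ B = N(v)`, `|A|,|B| ≥ 3`, and `G'` consists of a copy of `G - v`
(via `f`) together with two new adjacent vertices `a`, `b` where `a` is
additionally adjacent exactly to `A` and `b` exactly to `B`. -/
def IsFourSplitOn {V W : Type*} (G : SimpleGraph V) (v : V) (A B : Set V)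
    (G' : SimpleGraph W) : Prop :=
  A ∪ B = G.neighborSet v ∧ 3 ≤ A.ncard ∧ 3 ≤ B.ncard ∧
  ∃ (f : {u : V // u ≠ v} → W) (a b : W),
    Function.Injective f ∧ a ≠ b ∧
    (∀ u, f u ≠ a) ∧ (∀ u, f u ≠ b) ∧
    (∀ w : W, w = a ∨ w = b ∨ ∃ u, f u = w) ∧
    G'.Adj a b ∧
    (∀ u u' : {u : V // u ≠ v}, G'.Adj (f u) (f u') ↔ G.Adj u.1 u'.1) ∧
    (∀ u : {u : V // u ≠ v}, G'.Adj a (f u) ↔ u.1 ∈ A) ∧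
    (∀ u : {u : V // u ≠ v}, G'.Adj b (f u) ↔ u.1 ∈ B)

/-- `G'` is obtained from `G` by a 4-split of the vertex `v`. -/
def IsFourSplit {V W : Type*} (G : SimpleGraph V) (v : V)
    (G' : SimpleGraph W) : Prop :=
  ∃ A B : Set V, IsFourSplitOn G v A B G'

/-- The graph `Γ₁`: vertices `v₁,…,v₅ = 0,…,4`, `a = 5`, `b = 6`;
4-cycle `v₁v₂v₃v₄`, `v₅` adjacent to `v₁,v₂,v₃,v₄`, `a` adjacent to
`v₁,v₃,v₅,b`, and `b` adjacent to `v₂,v₃,v₄,a`. -/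
def Gamma1 : SimpleGraph (Fin 7) :=
  SimpleGraph.fromEdgeSet
    {s(0,1), s(1,2), s(2,3), s(3,0),
     s(4,0), s(4,1), s(4,2), s(4,3),
     s(5,0), s(5,2), s(5,4), s(5,6),
     s(6,1), s(6,2), s(6,3)}



private lemma reach_lift {α β : Type*} {G : SimpleGraph α} {H : SimpleGraph β} (g : α → β)
    (hadj : ∀ x y, G.Adj x y → H.Reachable (g x) (g y)) :
    ∀ {x y : α}, G.Reachable x y → H.Reachable (g x) (g y) := by
  intro x y h
  obtain ⟨w⟩ := h
  induction w with
  | nil => exact SimpleGraph.Reachable.refl _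
  | cons h p ih => exact (hadj _ _ h).trans ih

private lemma split_aux {V W : Type*} [Finite V] (G : SimpleGraph V) (v : V) (A B : Set V)
    (G' : SimpleGraph W)
    (hG4 : ∀ T : Set V, T.Finite → T.ncard ≤ 3 → (G.induce Tᶜ).Connected)
    (hAB : A ∪ B = G.neighborSet v) (hB3 : 3 ≤ B.ncard)
    (f : {u : V // u ≠ v} → W) (a b : W)
    (hfinj : Function.Injective f) (hab : a ≠ b)
    (hfa : ∀ u, f u ≠ a) (hfb : ∀ u, f u ≠ b)
    (hcover : ∀ w : W, w = a ∨ w = b ∨ ∃ u, f u = w)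
    (hGab : G'.Adj a b)
    (hff : ∀ u u', G'.Adj (f u) (f u') ↔ G.Adj u.1 u'.1)
    (hA : ∀ u, G'.Adj a (f u) ↔ u.1 ∈ A)
    (hB : ∀ u, G'.Adj b (f u) ↔ u.1 ∈ B)
    (S : Set W) (hSfin : S.Finite) (hS3 : S.ncard ≤ 3) (hbS : b ∉ S) :
    (G'.induce Sᶜ).Connected := by
  classical
  set T0 : Set {u : V // u ≠ v} := {u | f u ∈ S} with hT0
  set T : Set V := Subtype.val '' T0 with hT
  have hmemT : ∀ u : {u : V // u ≠ v}, u.1 ∈ T ↔ f u ∈ S := by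
    intro u
    constructor
    · rintro ⟨u', hu', h⟩
      have : u' = u := Subtype.ext h
      rwa [this] at hu'
    · intro h; exact ⟨u, h, rfl⟩
  have hvT : v ∉ T := by rintro ⟨u', _, h⟩; exact u'.2 h
  have hT0card : T0.ncard = T.ncard := (Set.ncard_image_of_injective T0 Subtype.val_injective).symm
  have hfT0 : f '' T0 ⊆ S := by rintro _ ⟨u, hu, rfl⟩; exact hu
  have hTcard3 : T.ncard ≤ 3 := by
    rw [← hT0card, ← Set.ncard_image_of_injective T0 hfinj]
    exact le_trans (Set.ncard_le_ncard hfT0 hSfin) hS3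
  have hmemT' : ∀ u : {u : V // u ≠ v}, f u ∈ (Sᶜ : Set W) ↔ u.1 ∉ T := by
    intro u; simp [hmemT u]
  by_cases haS : a ∈ S
  · -- a ∈ S, b ∉ S
    have hT2 : T.ncard ≤ 2 := by
      have hsub : f '' T0 ⊆ S \ {a} := by
        rintro _ ⟨u, hu, rfl⟩; exact ⟨hu, hfa u⟩
      have := Set.ncard_le_ncard hsub hSfin.diff
      rw [Set.ncard_image_of_injective T0 hfinj] at this
      rw [← hT0card]
      have hd : (S \ {a}).ncard = S.ncard - 1 := Set.ncard_diff_singleton_of_mem haS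
      omega
    set T' : Set V := insert v T with hT'
    have hconn := hG4 T' (Set.toFinite _) (le_trans (Set.ncard_insert_le v T) (by omega))
    -- find u₀ ∈ B \ T
    have hBT : ¬ B ⊆ T := by
      intro hsub
      have := Set.ncard_le_ncard hsub (Set.toFinite T)
      omega
    obtain ⟨u₀, hu₀B, hu₀T⟩ := Set.not_subset.mp hBT
    have hu₀v : u₀ ≠ v := by
      have : G.Adj v u₀ := by
        have : u₀ ∈ G.neighborSet v := hAB ▸ Or.inr hu₀B
        exact this
      exact this.ne'
    have hu₀T' : u₀ ∈ (T'ᶜ : Set V) := by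
      simp only [hT', Set.mem_compl_iff, Set.mem_insert_iff]
      push_neg; exact ⟨hu₀v, hu₀T⟩
    have hne : ∀ x : (T'ᶜ : Set V), x.1 ≠ v := by
      intro x hx
      exact x.2 (by rw [hx]; exact Set.mem_insert v T)
    have hnotT : ∀ x : (T'ᶜ : Set V), x.1 ∉ T := fun x hx => x.2 (Set.mem_insert_of_mem v hx)
    set g : (T'ᶜ : Set V) → (Sᶜ : Set W) :=
      fun x => ⟨f ⟨x.1, hne x⟩, (hmemT' ⟨x.1, hne x⟩).mpr (hnotT x)⟩ with hg
    have hadj : ∀ x y, (G.induce T'ᶜ).Adj x y → (G'.induce Sᶜ).Reachable (g x) (g y) := by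
      intro x y hxy
      have : G'.Adj (f ⟨x.1, hne x⟩) (f ⟨y.1, hne y⟩) := (hff _ _).mpr hxy
      exact SimpleGraph.Adj.reachable this
    have key : ∀ z : (Sᶜ : Set W),
        (G'.induce Sᶜ).Reachable z ⟨f ⟨u₀, hu₀v⟩, (hmemT' ⟨u₀, hu₀v⟩).mpr hu₀T⟩ := by
      intro z
      rcases hcover z.1 with hz | hz | ⟨u, hz⟩
      · exact absurd haS (hz ▸ z.2)
      · -- z = b
        have hadj' : G'.Adj b (f ⟨u₀, hu₀v⟩) := (hB _).mpr hu₀B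
        have : (G'.induce Sᶜ).Adj ⟨b, hbS⟩ ⟨f ⟨u₀, hu₀v⟩, (hmemT' ⟨u₀, hu₀v⟩).mpr hu₀T⟩ := hadj'
        have hzb : z = ⟨b, hbS⟩ := Subtype.ext hz
        rw [hzb]
        exact this.reachable
      · have huT : u.1 ∉ T := (hmemT' u).mp (hz ▸ z.2)
        have huT' : u.1 ∈ (T'ᶜ : Set V) := by
          simp only [hT', Set.mem_compl_iff, Set.mem_insert_iff]
          push_neg; exact ⟨u.2, huT⟩
        have hr := hconn.preconnected ⟨u.1, huT'⟩ ⟨u₀, hu₀T'⟩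
        have := reach_lift g hadj hr
        have hgz : g ⟨u.1, huT'⟩ = z := by
          apply Subtype.ext
          simp only [hg]
          rw [← hz]
        have hgu : g ⟨u₀, hu₀T'⟩ = ⟨f ⟨u₀, hu₀v⟩, (hmemT' ⟨u₀, hu₀v⟩).mpr hu₀T⟩ := rfl
        rw [hgz, hgu] at this
        exact this
    rw [SimpleGraph.connected_iff]
    refine ⟨fun x y => (key x).trans (key y).symm,
      ⟨⟨f ⟨u₀, hu₀v⟩, (hmemT' ⟨u₀, hu₀v⟩).mpr hu₀T⟩⟩⟩
  · -- a ∉ S, b ∉ S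
    have hconn := hG4 T (Set.toFinite _) hTcard3
    have hvTc : v ∈ (Tᶜ : Set V) := hvT
    set g : (Tᶜ : Set V) → (Sᶜ : Set W) :=
      fun x => if hx : x.1 = v then ⟨a, haS⟩ else ⟨f ⟨x.1, hx⟩, (hmemT' ⟨x.1, hx⟩).mpr x.2⟩ with hg
    have gv : ∀ (h : v ∈ (Tᶜ : Set V)), g ⟨v, h⟩ = ⟨a, haS⟩ := by
      intro h; simp only [hg, dif_pos]
    have gne : ∀ (x : (Tᶜ : Set V)) (hx : x.1 ≠ v),
        g x = ⟨f ⟨x.1, hx⟩, (hmemT' ⟨x.1, hx⟩).mpr x.2⟩ := by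
      intro x hx; simp only [hg, dif_neg hx]
    have hacopy : ∀ (u : {u : V // u ≠ v}) (hu : f u ∈ (Sᶜ : Set W)) (hmem : u.1 ∈ A ∪ B),
        (G'.induce Sᶜ).Reachable ⟨a, haS⟩ ⟨f u, hu⟩ := by
      intro u hu hmem
      rcases hmem with hmem | hmem
      · have : (G'.induce Sᶜ).Adj ⟨a, haS⟩ ⟨f u, hu⟩ := (hA u).mpr hmem
        exact this.reachable
      · have h1 : (G'.induce Sᶜ).Adj ⟨a, haS⟩ ⟨b, hbS⟩ := hGab
        have h2 : (G'.induce Sᶜ).Adj ⟨b, hbS⟩ ⟨f u, hu⟩ := (hB u).mpr hmem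
        exact h1.reachable.trans h2.reachable
    have hadj : ∀ x y, (G.induce Tᶜ).Adj x y → (G'.induce Sᶜ).Reachable (g x) (g y) := by
      intro x y hxy
      have hxy' : G.Adj x.1 y.1 := hxy
      by_cases hx : x.1 = v
      · have hy : y.1 ≠ v := fun h => hxy'.ne (hx.trans h.symm)
        have hmem : y.1 ∈ A ∪ B := by
          rw [hAB]; exact hx ▸ hxy'
        rw [gne y hy]
        have : g x = ⟨a, haS⟩ := by
          have : x = ⟨v, hx ▸ x.2⟩ := Subtype.ext hx
          rw [this, gv]
        rw [this]
        exact hacopy ⟨y.1, hy⟩ _ hmem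
      · by_cases hy : y.1 = v
        · have hmem : x.1 ∈ A ∪ B := by
            rw [hAB]; exact hy ▸ hxy'.symm
          rw [gne x hx]
          have : g y = ⟨a, haS⟩ := by
            have : y = ⟨v, hy ▸ y.2⟩ := Subtype.ext hy
            rw [this, gv]
          rw [this]
          exact (hacopy ⟨x.1, hx⟩ _ hmem).symm
        · rw [gne x hx, gne y hy]
          have : G'.Adj (f ⟨x.1, hx⟩) (f ⟨y.1, hy⟩) := (hff _ _).mpr hxy'
          exact SimpleGraph.Adj.reachable this
    have key : ∀ z : (Sᶜ : Set W), (G'.induce Sᶜ).Reachable z ⟨a, haS⟩ := by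
      intro z
      rcases hcover z.1 with hz | hz | ⟨u, hz⟩
      · have : z = ⟨a, haS⟩ := Subtype.ext hz
        rw [this]
      · have : z = ⟨b, hbS⟩ := Subtype.ext hz
        rw [this]
        exact (show (G'.induce Sᶜ).Adj ⟨b, hbS⟩ ⟨a, haS⟩ from hGab.symm).reachable
      · have huT : u.1 ∉ T := (hmemT' u).mp (hz ▸ z.2)
        have hr := hconn.preconnected ⟨u.1, huT⟩ ⟨v, hvTc⟩
        have := reach_lift g hadj hr
        rw [gv] at this
        rw [gne ⟨u.1, huT⟩ u.2] at this
        have hgz : (⟨f ⟨u.1, u.2⟩, (hmemT' ⟨u.1, u.2⟩).mpr huT⟩ : (Sᶜ : Set W)) = z := by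
          apply Subtype.ext
          rw [← hz]
        rw [hgz] at this
        exact this
    rw [SimpleGraph.connected_iff]
    exact ⟨fun x y => (key x).trans (key y).symm, ⟨⟨a, haS⟩⟩⟩

private lemma split_aux3 {V W : Type*} [Finite V] (G : SimpleGraph V) (v : V)
    (G' : SimpleGraph W)
    (hG4 : ∀ T : Set V, T.Finite → T.ncard ≤ 3 → (G.induce Tᶜ).Connected)
    (f : {u : V // u ≠ v} → W) (a b : W)
    (hfinj : Function.Injective f) (hab : a ≠ b)
    (hfa : ∀ u, f u ≠ a) (hfb : ∀ u, f u ≠ b)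
    (hcover : ∀ w : W, w = a ∨ w = b ∨ ∃ u, f u = w)
    (hff : ∀ u u', G'.Adj (f u) (f u') ↔ G.Adj u.1 u'.1)
    (S : Set W) (hSfin : S.Finite) (hS3 : S.ncard ≤ 3) (haS : a ∈ S) (hbS : b ∈ S) :
    (G'.induce Sᶜ).Connected := by
  classical
  set T0 : Set {u : V // u ≠ v} := {u | f u ∈ S} with hT0
  set T : Set V := Subtype.val '' T0 with hT
  have hmemT : ∀ u : {u : V // u ≠ v}, u.1 ∈ T ↔ f u ∈ S := by
    intro u
    constructor
    · rintro ⟨u', hu', h⟩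
      have : u' = u := Subtype.ext h
      rwa [this] at hu'
    · intro h; exact ⟨u, h, rfl⟩
  have hT1 : T.ncard ≤ 1 := by
    have hsub : f '' T0 ⊆ (S \ {a}) \ {b} := by
      rintro _ ⟨u, hu, rfl⟩; exact ⟨⟨hu, hfa u⟩, hfb u⟩
    have h1 := Set.ncard_le_ncard hsub hSfin.diff.diff
    rw [Set.ncard_image_of_injective T0 hfinj] at h1
    have hd1 : (S \ {a}).ncard = S.ncard - 1 := Set.ncard_diff_singleton_of_mem haS
    have hbmem : b ∈ S \ {a} := ⟨hbS, Ne.symm hab⟩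
    have hd2 : ((S \ {a}) \ {b}).ncard = (S \ {a}).ncard - 1 :=
      Set.ncard_diff_singleton_of_mem hbmem
    have hTc : T.ncard = T0.ncard := Set.ncard_image_of_injective T0 Subtype.val_injective
    omega
  set T' : Set V := insert v T with hT'
  have hconn := hG4 T' (Set.toFinite _) (le_trans (Set.ncard_insert_le v T) (by omega))
  have hne : ∀ x : (T'ᶜ : Set V), x.1 ≠ v := by
    intro x hx
    exact x.2 (by rw [hx]; exact Set.mem_insert v T)
  have hnotT : ∀ x : (T'ᶜ : Set V), x.1 ∉ T := fun x hx => x.2 (Set.mem_insert_of_mem v hx)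
  have hmemT' : ∀ u : {u : V // u ≠ v}, f u ∈ (Sᶜ : Set W) ↔ u.1 ∉ T := by
    intro u; simp [hmemT u]
  set g : (T'ᶜ : Set V) → (Sᶜ : Set W) :=
    fun x => ⟨f ⟨x.1, hne x⟩, (hmemT' ⟨x.1, hne x⟩).mpr (hnotT x)⟩ with hg
  have hadj : ∀ x y, (G.induce T'ᶜ).Adj x y → (G'.induce Sᶜ).Reachable (g x) (g y) := by
    intro x y hxy
    exact SimpleGraph.Adj.reachable ((hff _ _).mpr hxy)
  obtain ⟨x₀⟩ := hconn.nonempty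
  rw [SimpleGraph.connected_iff]
  constructor
  · intro z₁ z₂
    have key : ∀ z : (Sᶜ : Set W), (G'.induce Sᶜ).Reachable z (g x₀) := by
      intro z
      rcases hcover z.1 with hz | hz | ⟨u, hz⟩
      · exact absurd haS (hz ▸ z.2)
      · exact absurd hbS (hz ▸ z.2)
      · have huT : u.1 ∉ T := (hmemT' u).mp (hz ▸ z.2)
        have huT' : u.1 ∈ (T'ᶜ : Set V) := by
          simp only [hT', Set.mem_compl_iff, Set.mem_insert_iff]
          push_neg; exact ⟨u.2, huT⟩
        have hr := hconn.preconnected ⟨u.1, huT'⟩ x₀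
        have := reach_lift g hadj hr
        have hgz : g ⟨u.1, huT'⟩ = z := by
          apply Subtype.ext
          simp only [hg]
          rw [← hz]
        rw [hgz] at this
        exact this
    exact (key z₁).trans (key z₂).symm
  · exact ⟨g x₀⟩

/-- A 4-split of a vertex of a 4-connected graph is 4-connected. -/
theorem stmt_3 {V W : Type*} (G : SimpleGraph V) (v : V) (G' : SimpleGraph W)
    (hG : FourConnected G) (h : IsFourSplit G v G') : FourConnected G' := by

  classical
  obtain ⟨A, B, hAB, hA3, hB3, f, a, b, hfinj, hab, hfa, hfb, hcover, hGab, hff, hA, hB⟩ := h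
  obtain ⟨hcard, hG4⟩ := hG
  haveI hVfin : Finite V := (Nat.card_pos_iff.mp (by omega)).2
  haveI hWfin : Finite W := by
    apply Finite.of_surjective (fun x : {u : V // u ≠ v} ⊕ Bool =>
      match x with
      | Sum.inl u => f u
      | Sum.inr true => a
      | Sum.inr false => b)
    intro w
    rcases hcover w with hw | hw | ⟨u, hw⟩
    · exact ⟨Sum.inr true, hw.symm⟩
    · exact ⟨Sum.inr false, hw.symm⟩
    · exact ⟨Sum.inl u, hw⟩
  constructor
  · have hinj : Function.Injective (fun u : V => if h : u = v then a else f ⟨u, h⟩) := by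
      intro x y hxy
      by_cases hx : x = v <;> by_cases hy : y = v <;> simp only [dif_pos, dif_neg, hx, hy] at hxy
      · rw [hx, hy]
      · exact absurd hxy.symm (hfa _)
      · exact absurd hxy (hfa _)
      · exact Subtype.ext_iff.mp (hfinj hxy)
    calc 5 ≤ Nat.card V := hcard
    _ ≤ Nat.card W := Nat.card_le_card_of_injective _ hinj
  · intro S hSfin hS3
    by_cases hbS : b ∈ S
    · by_cases haS : a ∈ S
      · exact split_aux3 G v G' hG4 f a b hfinj hab hfa hfb hcover hff S hSfin hS3 haS hbS
      · -- swap roles: use aux with (B, A) and (b, a)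
        refine split_aux G v B A G' hG4 (by rw [Set.union_comm]; exact hAB) hA3 f b a hfinj
          hab.symm hfb hfa ?_ hGab.symm hff hB hA S hSfin hS3 haS
        intro w
        rcases hcover w with hw | hw | hw
        · exact Or.inr (Or.inl hw)
        · exact Or.inl hw
        · exact Or.inr (Or.inr hw)
    · exact split_aux G v A B G' hG4 hAB hB3 f a b hfinj hab hfa hfb hcover hGab hff hA hB
        S hSfin hS3 hbS
end

section
/- The line graph L(K_{3,3}) of K_{3,3} does not contain K_{3,3}+v as a minor. -/
section AuxK33vMinor

abbrev GK : SimpleGraph (Fin 3 ⊕ Fin 3) := completeBipartiteGraph (Fin 3) (Fin 3)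

def mval (k : Fin 9) : Sym2 (Fin 3 ⊕ Fin 3) :=
  s(Sum.inl ⟨k.val / 3, by omega⟩, Sum.inr ⟨k.val % 3, by omega⟩)

def mEdge (k : Fin 9) : GK.edgeSet :=
  ⟨mval k, (SimpleGraph.mem_edgeSet GK).mpr (Or.inl ⟨rfl, rfl⟩)⟩

def adjB (a b : Fin 9) : Bool :=
  (a.val != b.val) && ((a.val / 3 == b.val / 3) || (a.val % 3 == b.val % 3))

def adjH (x y : Fin 7) : Bool :=
  [(0,3),(0,4),(0,5),(1,3),(1,4),(1,5),(2,3),(2,4),(2,5),(6,0),(6,3),(6,1),(6,4),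
   (3,0),(4,0),(5,0),(3,1),(4,1),(5,1),(3,2),(4,2),(5,2),(0,6),(3,6),(1,6),(4,6)].contains
   (x.val, y.val)

lemma K33v_adj (x y : Fin 7) : K33v.Adj x y ↔ adjH x y = true := by
  have h : ∀ x y : Fin 7,
      ((s(x,y) ∈ ({s(0,3), s(0,4), s(0,5), s(1,3), s(1,4), s(1,5), s(2,3), s(2,4), s(2,5),
     s(6,0), s(6,3), s(6,1), s(6,4)} : Set (Sym2 (Fin 7)))) ∧ x ≠ y) ↔ adjH x y = true := by
    simp only [Set.mem_insert_iff, Set.mem_singleton_iff, Sym2.eq_iff]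
    decide
  rw [K33v, SimpleGraph.fromEdgeSet_adj]
  exact h x y

lemma mval_inj : ∀ a b : Fin 9, mval a = mval b → a = b := by decide

lemma adj_mEdge (a b : Fin 9) : GK.lineGraph.Adj (mEdge a) (mEdge b) ↔ adjB a b = true := by
  have core : ∀ a b : Fin 9,
      ((¬ mval a = mval b) ∧ ∃ v, v ∈ mval a ∧ v ∈ mval b) ↔ adjB a b = true := by decide
  rw [SimpleGraph.lineGraph_adj_iff_exists]
  rw [ne_eq, Subtype.ext_iff]
  exact core a b

lemma mval_eq : ∀ (i j : Fin 3), mval ⟨3 * i.val + j.val, by omega⟩ = s(Sum.inl i, Sum.inr j) := by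
  decide

lemma mEdge_surj (e : GK.edgeSet) : ∃ k : Fin 9, mEdge k = e := by
  obtain ⟨q, hq⟩ := e
  induction q using Sym2.ind with
  | _ x y =>
    rw [SimpleGraph.mem_edgeSet] at hq
    cases x with
    | inl i =>
      cases y with
      | inl i' => simp [completeBipartiteGraph] at hq
      | inr j =>
        exact ⟨⟨3 * i.val + j.val, by omega⟩, Subtype.ext (mval_eq i j)⟩
    | inr j =>
      cases y with
      | inr j' => simp [completeBipartiteGraph] at hq
      | inl i =>
        refine ⟨⟨3 * i.val + j.val, by omega⟩, Subtype.ext ?_⟩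
        show mval _ = s(Sum.inr j, Sum.inl i)
        rw [mval_eq i j]
        exact Sym2.eq_swap

lemma firstStep {V : Type*} {G : SimpleGraph V} {S : Set V}
    (h : (G.induce S).Connected) {a b : V} (ha : a ∈ S) (hb : b ∈ S) (hab : a ≠ b) :
    ∃ c, c ∈ S ∧ G.Adj a c := by
  obtain ⟨w⟩ := h.preconnected ⟨a, ha⟩ ⟨b, hb⟩
  cases w with
  | nil => exact absurd rfl hab
  | @cons _ x _ h' p => exact ⟨x.val, x.2, h'⟩

def msk (S : Finset (Fin 9)) : Nat := S.sum fun v => 2 ^ v.val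

def Cands : List (Nat × Nat × Nat) := [(1,78,1), (2,149,1), (4,291,1), (8,113,1), (16,170,1), (32,284,1), (64,393,1), (128,338,1), (256,228,1), (3,223,2), (5,367,2), (9,127,2), (65,463,2), (6,439,2), (18,191,2), (130,471,2), (36,319,2), (260,487,2), (24,251,2), (40,381,2), (72,505,2), (48,446,2), (144,506,2), (288,508,2), (192,475,2), (320,493,2), (384,502,2), (7,511,3), (11,255,3), (19,255,3), (67,479,3), (131,479,3), (13,383,3), (37,383,3), (69,495,3), (261,495,3), (25,255,3), (41,383,3), (73,511,3), (193,479,3), (321,495,3), (22,447,3), (38,447,3), (134,503,3), (262,503,3), (26,255,3), (50,447,3), (146,511,3), (194,479,3), (386,503,3), (44,383,3), (52,447,3), (292,511,3), (324,495,3), (388,503,3), (56,511,3), (88,507,3), (152,507,3), (104,509,3), (296,509,3), (200,507,3), (328,509,3), (176,510,3), (304,510,3), (208,507,3), (400,510,3), (352,509,3), (416,510,3), (448,511,3)]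

def dj (p q : Nat × Nat × Nat) : Bool := p.1 &&& q.1 == 0
def cr (p q : Nat × Nat × Nat) : Bool := !(p.2.1 &&& q.1 == 0)

set_option maxRecDepth 100000 in
set_option maxHeartbeats 10000000 in
lemma msk_testBit : ∀ (S : Finset (Fin 9)) (v : Fin 9),
    (msk S).testBit v.val = decide (v ∈ S) := by decide +kernel

set_option maxRecDepth 100000 in
set_option maxHeartbeats 10000000 in
lemma msk_lt : ∀ S : Finset (Fin 9), msk S < 512 := by decide +kernel

set_option maxRecDepth 100000 in
set_option maxHeartbeats 10000000 in
lemma nbBit : ∀ p ∈ Cands, ∀ a b : Fin 9,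
    p.1.testBit a.val = true → adjB a b = true → p.2.1.testBit b.val = true := by decide +kernel

set_option maxRecDepth 100000 in
set_option maxHeartbeats 40000000 in
lemma candMem : ∀ S : Finset (Fin 9), S.Nonempty → S.card ≤ 3 →
    (∀ v ∈ S, 2 ≤ S.card → ∃ u ∈ S, adjB v u = true) →
    ∃ p ∈ Cands, p.1 = msk S ∧ p.2.2 = S.card := by decide +kernel

lemma msk_inj {S T : Finset (Fin 9)} (h : msk S = msk T) : S = T := by
  ext v
  have hS := msk_testBit S v
  rw [h, msk_testBit T v] at hS
  have hST := hS.symm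
  constructor
  · intro hv
    have h1 : decide (v ∈ T) = true := by rw [← hST]; exact decide_eq_true hv
    exact of_decide_eq_true h1
  · intro hv
    have h1 : decide (v ∈ S) = true := by rw [hST]; exact decide_eq_true hv
    exact of_decide_eq_true h1

lemma msk_land {S S' : Finset (Fin 9)} (h : Disjoint S S') : msk S &&& msk S' = 0 := by
  apply Nat.eq_of_testBit_eq
  intro i
  rw [Nat.testBit_land, Nat.zero_testBit]
  by_cases hi : i < 9
  · have h1 : (msk S).testBit i = decide ((⟨i, hi⟩ : Fin 9) ∈ S) := msk_testBit S ⟨i, hi⟩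
    have h2 : (msk S').testBit i = decide ((⟨i, hi⟩ : Fin 9) ∈ S') := msk_testBit S' ⟨i, hi⟩
    rw [h1, h2]
    by_cases hu : (⟨i, hi⟩ : Fin 9) ∈ S
    · have hw : (⟨i, hi⟩ : Fin 9) ∉ S' := Finset.disjoint_left.mp h hu
      simp [hw]
    · simp [hu]
  · have h512 : (512:Nat) ≤ 2^i :=
      calc (512:Nat) = 2^9 := by norm_num
      _ ≤ 2^i := Nat.pow_le_pow_right (by omega) (by omega)
    rw [Nat.testBit_lt_two_pow (lt_of_lt_of_le (msk_lt S) h512)]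
    rfl

lemma dj_true {p q : Nat × Nat × Nat} {S S' : Finset (Fin 9)}
    (hp : p.1 = msk S) (hq : q.1 = msk S') (h : Disjoint S S') : dj p q = true := by
  unfold dj
  rw [hp, hq, beq_iff_eq]
  exact msk_land h

lemma cr_true {p q : Nat × Nat × Nat} {S S' : Finset (Fin 9)} (hpc : p ∈ Cands)
    (hp : p.1 = msk S) (hq : q.1 = msk S')
    (h : ∃ u ∈ S, ∃ w ∈ S', adjB u w = true) : cr p q = true := by
  obtain ⟨u, hu, w, hw, huw⟩ := h
  unfold cr
  rw [Bool.not_eq_true', beq_eq_false_iff_ne]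
  intro h0
  have t1 : p.2.1.testBit w.val = true :=
    nbBit p hpc u w (by rw [hp, msk_testBit]; exact decide_eq_true hu) huw
  have t2 : q.1.testBit w.val = true := by
    rw [hq, msk_testBit]; exact decide_eq_true hw
  have t3 : (p.2.1 &&& q.1).testBit w.val = true := by
    rw [Nat.testBit_land, t1, t2]; rfl
  rw [h0, Nat.zero_testBit] at t3
  exact Bool.false_ne_true t3

def srch : Bool :=
  Cands.any fun p0 =>
  Cands.any fun p3 => dj p0 p3 && cr p0 p3 &&
    Nat.blt p0.1 p3.1 && Nat.ble (p0.2.2 + p3.2.2) 4 &&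
  (Cands.any fun p4 => dj p0 p4 && dj p3 p4 && cr p0 p4 &&
    Nat.blt p0.1 p4.1 && Nat.blt p3.1 p4.1 && Nat.ble (p0.2.2 + p3.2.2 + p4.2.2) 5 &&
  (Cands.any fun p6 => dj p0 p6 && dj p3 p6 && dj p4 p6 &&
    cr p0 p6 && cr p3 p6 && cr p4 p6 &&
    Nat.ble (p0.2.2 + p3.2.2 + p4.2.2 + p6.2.2) 6 &&
  (Cands.any fun p1 => dj p0 p1 && dj p3 p1 && dj p4 p1 && dj p6 p1 &&
    cr p3 p1 && cr p4 p1 && cr p6 p1 &&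
    Nat.blt p0.1 p1.1 && Nat.ble (p0.2.2 + p3.2.2 + p4.2.2 + p6.2.2 + p1.2.2) 7 &&
  (Cands.any fun p5 => dj p0 p5 && dj p3 p5 && dj p4 p5 && dj p6 p5 && dj p1 p5 &&
    cr p0 p5 && cr p1 p5 &&
    Nat.ble (p0.2.2 + p3.2.2 + p4.2.2 + p6.2.2 + p1.2.2 + p5.2.2) 8 &&
  (Cands.any fun p2 => dj p0 p2 && dj p3 p2 && dj p4 p2 && dj p6 p2 && dj p1 p2 && dj p5 p2 &&
    cr p3 p2 && cr p4 p2 && cr p5 p2)))))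

set_option maxRecDepth 100000 in
set_option maxHeartbeats 40000000 in
theorem srch_false : srch = false := by decide +kernel

lemma KEY (A : Fin 7 → Finset (Fin 9))
    (hn : ∀ i, (A i).Nonempty)
    (hd : ∀ i j : Fin 7, i ≠ j → Disjoint (A i) (A j))
    (hcn : ∀ i, ∀ v ∈ A i, 2 ≤ (A i).card → ∃ u ∈ A i, adjB v u = true)
    (hx : ∀ x y : Fin 7, adjH x y = true → ∃ u ∈ A x, ∃ w ∈ A y, adjB u w = true)
    (m1 : msk (A 0) < msk (A 1)) (m2 : msk (A 0) < msk (A 3))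
    (m3 : msk (A 0) < msk (A 4)) (m4 : msk (A 3) < msk (A 4)) : False := by
  have D1 : Disjoint (A 0) (A 1) := hd 0 1 (by decide)
  have D2 : Disjoint (A 0 ∪ A 1) (A 2) := Finset.disjoint_union_left.mpr ⟨hd 0 2 (by decide), hd 1 2 (by decide)⟩
  have D3 : Disjoint (A 0 ∪ A 1 ∪ A 2) (A 3) := Finset.disjoint_union_left.mpr ⟨Finset.disjoint_union_left.mpr ⟨hd 0 3 (by decide), hd 1 3 (by decide)⟩, hd 2 3 (by decide)⟩
  have D4 : Disjoint (A 0 ∪ A 1 ∪ A 2 ∪ A 3) (A 4) := Finset.disjoint_union_left.mpr ⟨Finset.disjoint_union_left.mpr ⟨Finset.disjoint_union_left.mpr ⟨hd 0 4 (by decide), hd 1 4 (by decide)⟩, hd 2 4 (by decide)⟩, hd 3 4 (by decide)⟩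
  have D5 : Disjoint (A 0 ∪ A 1 ∪ A 2 ∪ A 3 ∪ A 4) (A 5) := Finset.disjoint_union_left.mpr ⟨Finset.disjoint_union_left.mpr ⟨Finset.disjoint_union_left.mpr ⟨Finset.disjoint_union_left.mpr ⟨hd 0 5 (by decide), hd 1 5 (by decide)⟩, hd 2 5 (by decide)⟩, hd 3 5 (by decide)⟩, hd 4 5 (by decide)⟩
  have D6 : Disjoint (A 0 ∪ A 1 ∪ A 2 ∪ A 3 ∪ A 4 ∪ A 5) (A 6) := Finset.disjoint_union_left.mpr ⟨Finset.disjoint_union_left.mpr ⟨Finset.disjoint_union_left.mpr ⟨Finset.disjoint_union_left.mpr ⟨Finset.disjoint_union_left.mpr ⟨hd 0 6 (by decide), hd 1 6 (by decide)⟩, hd 2 6 (by decide)⟩, hd 3 6 (by decide)⟩, hd 4 6 (by decide)⟩, hd 5 6 (by decide)⟩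
  have hu : (A 0 ∪ A 1 ∪ A 2 ∪ A 3 ∪ A 4 ∪ A 5 ∪ A 6).card = (A 0).card + (A 1).card + (A 2).card + (A 3).card + (A 4).card + (A 5).card + (A 6).card := by
    rw [Finset.card_union_of_disjoint D6, Finset.card_union_of_disjoint D5, Finset.card_union_of_disjoint D4, Finset.card_union_of_disjoint D3, Finset.card_union_of_disjoint D2, Finset.card_union_of_disjoint D1]
  have hsum : (A 0).card + (A 1).card + (A 2).card + (A 3).card + (A 4).card + (A 5).card + (A 6).card ≤ 9 := by
    rw [← hu]
    calc (A 0 ∪ A 1 ∪ A 2 ∪ A 3 ∪ A 4 ∪ A 5 ∪ A 6).card ≤ (Finset.univ : Finset (Fin 9)).card := Finset.card_le_univ _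
    _ = 9 := by simp
  have hl0 : 1 ≤ (A 0).card := (hn 0).card_pos
  have hl1 : 1 ≤ (A 1).card := (hn 1).card_pos
  have hl2 : 1 ≤ (A 2).card := (hn 2).card_pos
  have hl3 : 1 ≤ (A 3).card := (hn 3).card_pos
  have hl4 : 1 ≤ (A 4).card := (hn 4).card_pos
  have hl5 : 1 ≤ (A 5).card := (hn 5).card_pos
  have hl6 : 1 ≤ (A 6).card := (hn 6).card_pos
  have h30 : (A 0).card ≤ 3 := by omega
  have h31 : (A 1).card ≤ 3 := by omega
  have h32 : (A 2).card ≤ 3 := by omega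
  have h33 : (A 3).card ≤ 3 := by omega
  have h34 : (A 4).card ≤ 3 := by omega
  have h35 : (A 5).card ≤ 3 := by omega
  have h36 : (A 6).card ≤ 3 := by omega
  obtain ⟨p0, pm0, pa0, pc0⟩ := candMem (A 0) (hn 0) h30 (hcn 0)
  obtain ⟨p1, pm1, pa1, pc1⟩ := candMem (A 1) (hn 1) h31 (hcn 1)
  obtain ⟨p2, pm2, pa2, pc2⟩ := candMem (A 2) (hn 2) h32 (hcn 2)
  obtain ⟨p3, pm3, pa3, pc3⟩ := candMem (A 3) (hn 3) h33 (hcn 3)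
  obtain ⟨p4, pm4, pa4, pc4⟩ := candMem (A 4) (hn 4) h34 (hcn 4)
  obtain ⟨p5, pm5, pa5, pc5⟩ := candMem (A 5) (hn 5) h35 (hcn 5)
  obtain ⟨p6, pm6, pa6, pc6⟩ := candMem (A 6) (hn 6) h36 (hcn 6)
  have hs : srch = true := by
    unfold srch
    refine List.any_eq_true.mpr ⟨p0, pm0, ?_⟩
    refine List.any_eq_true.mpr ⟨p3, pm3, ?_⟩
    simp only [Bool.and_eq_true]
    refine ⟨⟨⟨⟨?_, ?_⟩, ?_⟩, ?_⟩, ?_⟩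
    · exact dj_true pa0 pa3 (hd 0 3 (by decide))
    · exact cr_true pm0 pa0 pa3 (hx 0 3 (by decide))
    · rw [pa0, pa3]; simp only [Nat.blt_eq]; exact m2
    · rw [pc0, pc3]; simp only [Nat.ble_eq]; omega
    · -- next level
      refine List.any_eq_true.mpr ⟨p4, pm4, ?_⟩
      simp only [Bool.and_eq_true]
      refine ⟨⟨⟨⟨⟨⟨?_, ?_⟩, ?_⟩, ?_⟩, ?_⟩, ?_⟩, ?_⟩
      · exact dj_true pa0 pa4 (hd 0 4 (by decide))
      · exact dj_true pa3 pa4 (hd 3 4 (by decide))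
      · exact cr_true pm0 pa0 pa4 (hx 0 4 (by decide))
      · rw [pa0, pa4]; simp only [Nat.blt_eq]; exact m3
      · rw [pa3, pa4]; simp only [Nat.blt_eq]; exact m4
      · rw [pc0, pc3, pc4]; simp only [Nat.ble_eq]; omega
      · -- next level
        refine List.any_eq_true.mpr ⟨p6, pm6, ?_⟩
        simp only [Bool.and_eq_true]
        refine ⟨⟨⟨⟨⟨⟨⟨?_, ?_⟩, ?_⟩, ?_⟩, ?_⟩, ?_⟩, ?_⟩, ?_⟩
        · exact dj_true pa0 pa6 (hd 0 6 (by decide))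
        · exact dj_true pa3 pa6 (hd 3 6 (by decide))
        · exact dj_true pa4 pa6 (hd 4 6 (by decide))
        · exact cr_true pm0 pa0 pa6 (hx 0 6 (by decide))
        · exact cr_true pm3 pa3 pa6 (hx 3 6 (by decide))
        · exact cr_true pm4 pa4 pa6 (hx 4 6 (by decide))
        · rw [pc0, pc3, pc4, pc6]; simp only [Nat.ble_eq]; omega
        · -- next level
          refine List.any_eq_true.mpr ⟨p1, pm1, ?_⟩
          simp only [Bool.and_eq_true]
          refine ⟨⟨⟨⟨⟨⟨⟨⟨⟨?_, ?_⟩, ?_⟩, ?_⟩, ?_⟩, ?_⟩, ?_⟩, ?_⟩, ?_⟩, ?_⟩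
          · exact dj_true pa0 pa1 (hd 0 1 (by decide))
          · exact dj_true pa3 pa1 (hd 3 1 (by decide))
          · exact dj_true pa4 pa1 (hd 4 1 (by decide))
          · exact dj_true pa6 pa1 (hd 6 1 (by decide))
          · exact cr_true pm3 pa3 pa1 (hx 3 1 (by decide))
          · exact cr_true pm4 pa4 pa1 (hx 4 1 (by decide))
          · exact cr_true pm6 pa6 pa1 (hx 6 1 (by decide))
          · rw [pa0, pa1]; simp only [Nat.blt_eq]; exact m1
          · rw [pc0, pc3, pc4, pc6, pc1]; simp only [Nat.ble_eq]; omega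
          · -- next level
            refine List.any_eq_true.mpr ⟨p5, pm5, ?_⟩
            simp only [Bool.and_eq_true]
            refine ⟨⟨⟨⟨⟨⟨⟨⟨?_, ?_⟩, ?_⟩, ?_⟩, ?_⟩, ?_⟩, ?_⟩, ?_⟩, ?_⟩
            · exact dj_true pa0 pa5 (hd 0 5 (by decide))
            · exact dj_true pa3 pa5 (hd 3 5 (by decide))
            · exact dj_true pa4 pa5 (hd 4 5 (by decide))
            · exact dj_true pa6 pa5 (hd 6 5 (by decide))
            · exact dj_true pa1 pa5 (hd 1 5 (by decide))
            · exact cr_true pm0 pa0 pa5 (hx 0 5 (by decide))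
            · exact cr_true pm1 pa1 pa5 (hx 1 5 (by decide))
            · rw [pc0, pc3, pc4, pc6, pc1, pc5]; simp only [Nat.ble_eq]; omega
            · -- next level
              refine List.any_eq_true.mpr ⟨p2, pm2, ?_⟩
              simp only [Bool.and_eq_true]
              refine ⟨⟨⟨⟨⟨⟨⟨⟨?_, ?_⟩, ?_⟩, ?_⟩, ?_⟩, ?_⟩, ?_⟩, ?_⟩, ?_⟩
              · exact dj_true pa0 pa2 (hd 0 2 (by decide))
              · exact dj_true pa3 pa2 (hd 3 2 (by decide))
              · exact dj_true pa4 pa2 (hd 4 2 (by decide))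
              · exact dj_true pa6 pa2 (hd 6 2 (by decide))
              · exact dj_true pa1 pa2 (hd 1 2 (by decide))
              · exact dj_true pa5 pa2 (hd 5 2 (by decide))
              · exact cr_true pm3 pa3 pa2 (hx 3 2 (by decide))
              · exact cr_true pm4 pa4 pa2 (hx 4 2 (by decide))
              · exact cr_true pm5 pa5 pa2 (hx 5 2 (by decide))
  rw [srch_false] at hs
  exact Bool.false_ne_true hs

/-- The line graph of `K₃,₃` does not contain `K₃,₃ + v` as a minor. -/
theorem stmt_7 :
    ¬ IsMinor K33v (completeBipartiteGraph (Fin 3) (Fin 3)).lineGraph := by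
  classical
  rintro ⟨φ, hne, hconn, hdisj, hadj⟩
  obtain ⟨T, hmemT⟩ : ∃ T : Fin 7 → Finset (Fin 9), ∀ i k, k ∈ T i ↔ mEdge k ∈ φ i :=
    ⟨fun i => Finset.univ.filter fun k => mEdge k ∈ φ i, fun i k => by simp⟩
  have hTne : ∀ i, (T i).Nonempty := by
    intro i
    obtain ⟨x, hx⟩ := hne i
    obtain ⟨k, hk⟩ := mEdge_surj x
    exact ⟨k, (hmemT i k).mpr (hk ▸ hx)⟩
  have hTdisj : ∀ i j : Fin 7, i ≠ j → Disjoint (T i) (T j) := by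
    intro i j hij
    rw [Finset.disjoint_left]
    intro k hki hkj
    exact Set.disjoint_left.mp (hdisj hij) ((hmemT i k).mp hki) ((hmemT j k).mp hkj)
  have hTconn : ∀ i, ∀ v ∈ T i, 2 ≤ (T i).card → ∃ u ∈ T i, adjB v u = true := by
    intro i v hv h2
    obtain ⟨u', hu', hneq⟩ := Finset.exists_mem_ne (s := T i) (by omega) v
    have hv' := (hmemT i v).mp hv
    have hu'' := (hmemT i u').mp hu'
    have hne' : (mEdge v : GK.edgeSet) ≠ mEdge u' := by
      intro h
      exact hneq (mval_inj u' v (congrArg Subtype.val h).symm)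
    obtain ⟨c, hcS, hcadj⟩ := firstStep (hconn i) hv' hu'' hne'
    obtain ⟨u, hu⟩ := mEdge_surj c
    refine ⟨u, (hmemT i u).mpr (hu ▸ hcS), ?_⟩
    exact (adj_mEdge v u).mp (by rw [hu]; exact hcadj)
  have hTcross : ∀ x y : Fin 7, adjH x y = true → ∃ u ∈ T x, ∃ w ∈ T y, adjB u w = true := by
    intro x y hxy
    obtain ⟨u', hu', w', hw', hadj'⟩ := hadj x y ((K33v_adj x y).mpr hxy)
    obtain ⟨u, hu⟩ := mEdge_surj u'
    obtain ⟨w, hw⟩ := mEdge_surj w'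
    refine ⟨u, (hmemT x u).mpr (hu ▸ hu'), w, (hmemT y w).mpr (hw ▸ hw'), ?_⟩
    exact (adj_mEdge u w).mp (by rw [hu, hw]; exact hadj')
  have hmne : ∀ i j : Fin 7, i ≠ j → msk (T i) ≠ msk (T j) := by
    intro i j hij h
    have hTeq := msk_inj h
    have hdj := hTdisj i j hij
    rw [hTeq] at hdj
    rw [disjoint_self] at hdj
    exact (hTne j).ne_empty hdj
  rcases lt_or_gt_of_ne (hmne 0 1 (by decide)) with h1 | h1
  · rcases lt_or_gt_of_ne (hmne 3 4 (by decide)) with h2 | h2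
    · rcases lt_or_gt_of_ne (hmne 0 3 (by decide)) with h3 | h3
      · -- a<b, c<d, a<c : identity
        exact KEY T hTne hTdisj hTconn hTcross h1 h3 (lt_trans h3 h2) h2
      · -- a<b, c<d, c<a : π = ![3,4,5,0,1,2,6]
        have pinj : ∀ i j : Fin 7, (![3,4,5,0,1,2,6] : Fin 7 → Fin 7) i = ![3,4,5,0,1,2,6] j → i = j := by decide
        have padj : ∀ x y : Fin 7, adjH x y = true → adjH ((![3,4,5,0,1,2,6] : Fin 7 → Fin 7) x) (![3,4,5,0,1,2,6] y) = true := by decide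
        exact KEY (fun i => T (![3,4,5,0,1,2,6] i)) (fun i => hTne _)
          (fun i j hij => hTdisj _ _ fun h => hij (pinj i j h))
          (fun i => hTconn _) (fun x y h => hTcross _ _ (padj x y h))
          h2 h3 (lt_trans h3 h1) h1
    · rcases lt_or_gt_of_ne (hmne 0 4 (by decide)) with h3 | h3
      · -- a<b, d<c, a<d : π = ![0,1,2,4,3,5,6]
        have pinj : ∀ i j : Fin 7, (![0,1,2,4,3,5,6] : Fin 7 → Fin 7) i = ![0,1,2,4,3,5,6] j → i = j := by decide
        have padj : ∀ x y : Fin 7, adjH x y = true → adjH ((![0,1,2,4,3,5,6] : Fin 7 → Fin 7) x) (![0,1,2,4,3,5,6] y) = true := by decide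
        exact KEY (fun i => T (![0,1,2,4,3,5,6] i)) (fun i => hTne _)
          (fun i j hij => hTdisj _ _ fun h => hij (pinj i j h))
          (fun i => hTconn _) (fun x y h => hTcross _ _ (padj x y h))
          h1 h3 (lt_trans h3 h2) h2
      · -- a<b, d<c, d<a : π = ![4,3,5,0,1,2,6]
        have pinj : ∀ i j : Fin 7, (![4,3,5,0,1,2,6] : Fin 7 → Fin 7) i = ![4,3,5,0,1,2,6] j → i = j := by decide
        have padj : ∀ x y : Fin 7, adjH x y = true → adjH ((![4,3,5,0,1,2,6] : Fin 7 → Fin 7) x) (![4,3,5,0,1,2,6] y) = true := by decide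
        exact KEY (fun i => T (![4,3,5,0,1,2,6] i)) (fun i => hTne _)
          (fun i j hij => hTdisj _ _ fun h => hij (pinj i j h))
          (fun i => hTconn _) (fun x y h => hTcross _ _ (padj x y h))
          h2 h3 (lt_trans h3 h1) h1
  · rcases lt_or_gt_of_ne (hmne 3 4 (by decide)) with h2 | h2
    · rcases lt_or_gt_of_ne (hmne 1 3 (by decide)) with h3 | h3
      · -- b<a, c<d, b<c : π = ![1,0,2,3,4,5,6]
        have pinj : ∀ i j : Fin 7, (![1,0,2,3,4,5,6] : Fin 7 → Fin 7) i = ![1,0,2,3,4,5,6] j → i = j := by decide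
        have padj : ∀ x y : Fin 7, adjH x y = true → adjH ((![1,0,2,3,4,5,6] : Fin 7 → Fin 7) x) (![1,0,2,3,4,5,6] y) = true := by decide
        exact KEY (fun i => T (![1,0,2,3,4,5,6] i)) (fun i => hTne _)
          (fun i j hij => hTdisj _ _ fun h => hij (pinj i j h))
          (fun i => hTconn _) (fun x y h => hTcross _ _ (padj x y h))
          h1 h3 (lt_trans h3 h2) h2
      · -- b<a, c<d, c<b : π = ![3,4,5,1,0,2,6]
        have pinj : ∀ i j : Fin 7, (![3,4,5,1,0,2,6] : Fin 7 → Fin 7) i = ![3,4,5,1,0,2,6] j → i = j := by decide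
        have padj : ∀ x y : Fin 7, adjH x y = true → adjH ((![3,4,5,1,0,2,6] : Fin 7 → Fin 7) x) (![3,4,5,1,0,2,6] y) = true := by decide
        exact KEY (fun i => T (![3,4,5,1,0,2,6] i)) (fun i => hTne _)
          (fun i j hij => hTdisj _ _ fun h => hij (pinj i j h))
          (fun i => hTconn _) (fun x y h => hTcross _ _ (padj x y h))
          h2 h3 (lt_trans h3 h1) h1
    · rcases lt_or_gt_of_ne (hmne 1 4 (by decide)) with h3 | h3
      · -- b<a, d<c, b<d : π = ![1,0,2,4,3,5,6]
        have pinj : ∀ i j : Fin 7, (![1,0,2,4,3,5,6] : Fin 7 → Fin 7) i = ![1,0,2,4,3,5,6] j → i = j := by decide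
        have padj : ∀ x y : Fin 7, adjH x y = true → adjH ((![1,0,2,4,3,5,6] : Fin 7 → Fin 7) x) (![1,0,2,4,3,5,6] y) = true := by decide
        exact KEY (fun i => T (![1,0,2,4,3,5,6] i)) (fun i => hTne _)
          (fun i j hij => hTdisj _ _ fun h => hij (pinj i j h))
          (fun i => hTconn _) (fun x y h => hTcross _ _ (padj x y h))
          h1 h3 (lt_trans h3 h2) h2
      · -- b<a, d<c, d<b : π = ![4,3,5,1,0,2,6]
        have pinj : ∀ i j : Fin 7, (![4,3,5,1,0,2,6] : Fin 7 → Fin 7) i = ![4,3,5,1,0,2,6] j → i = j := by decide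
        have padj : ∀ x y : Fin 7, adjH x y = true → adjH ((![4,3,5,1,0,2,6] : Fin 7 → Fin 7) x) (![4,3,5,1,0,2,6] y) = true := by decide
        exact KEY (fun i => T (![4,3,5,1,0,2,6] i)) (fun i => hTne _)
          (fun i j hij => hTdisj _ _ fun h => hij (pinj i j h))
          (fun i => hTconn _) (fun x y h => hTcross _ _ (padj x y h))
          h2 h3 (lt_trans h3 h1) h1

end AuxK33vMinor
end

section
/- Every graph obtained from the double wheel DW_5 by adding a single new edge contains K_{3,3}+v as a minor. -/
/-!
For a chord `v₀v₂`, `K₃,₃ + v` is already a subgraph: take the parts `{v₀, v₁, v₃}` and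
`{a, b, v₂}` (the chord supplies `v₀v₂`, the cycle supplies `v₁v₂` and `v₂v₃`) and let `v₄`,
adjacent to `v₀, v₃, a, b`, play the extra vertex. The only non-edges of `DW₅` are the chords
`vₖvₖ₊₂`, and rotating the cycle carries this copy to each of them.
-/

open SimpleGraph

instance (n : ℕ) : DecidableRel (DW n).Adj := fun u v => by
  rcases u with i | i <;> rcases v with j | j <;> simp only [DW, fromRel_adj] <;> infer_instance

instance : DecidableRel K33v.Adj := by
  unfold K33v; infer_instance

theorem IsMinor.of_isContained {α β : Type*} {H : SimpleGraph α} {G : SimpleGraph β}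
    (h : H ⊑ G) : IsMinor H G := by
  obtain ⟨f⟩ := h
  refine ⟨fun x => {f x}, fun x => Set.singleton_nonempty _, fun x => .of_subsingleton,
    fun x y hxy => Set.disjoint_singleton.mpr (f.injective.ne hxy), fun x y hxy => ?_⟩
  exact ⟨f x, rfl, f y, rfl, f.toHom.map_adj hxy⟩

theorem exists_chord_eq_of_not_adj_DW5 (u w : Fin 5 ⊕ Fin 2) (hne : u ≠ w)
    (h : ¬ (DW 5).Adj u w) : ∃ k : Fin 5, s(u, w) = s(.inl k, .inl (k + 2)) := by
  revert u w
  decide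

def chordCopy (k : Fin 5) : Fin 7 → Fin 5 ⊕ Fin 2 :=
  Sum.map (· + k) id ∘ ![.inl 0, .inl 3, .inl 1, .inr 0, .inr 1, .inl 2, .inl 4]

theorem K33v_isContained_DW5_sup_chord (k : Fin 5) :
    K33v ⊑ DW 5 ⊔ fromEdgeSet {s(.inl k, .inl (k + 2))} := by
  have hadj : ∀ j : Fin 5, ∀ x y, K33v.Adj x y →
      (DW 5 ⊔ fromEdgeSet {s(.inl j, .inl (j + 2))}).Adj (chordCopy j x) (chordCopy j y) := by
    decide
  have hinj : ∀ j : Fin 5, Function.Injective (chordCopy j) := by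
    decide
  exact ⟨⟨⟨chordCopy k, hadj k _ _⟩, hinj k⟩⟩

/-- Every graph obtained from `DW₅` by adding a single new edge contains
`K₃,₃ + v` as a minor. -/
theorem stmt_13 (u w : Fin 5 ⊕ Fin 2) (hne : u ≠ w) (h : ¬ (DW 5).Adj u w) :
    IsMinor K33v (DW 5 ⊔ SimpleGraph.fromEdgeSet {s(u, w)}) := by
  obtain ⟨k, hk⟩ := exists_chord_eq_of_not_adj_DW5 u w hne h
  rw [hk]
  exact .of_isContained (K33v_isContained_DW5_sup_chord k)
end

section
/- For every n ≥ 6, every graph obtained from the double wheel DW_n by adding a single new edge contains K_{3,3}+v as a minor. -/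
open Fin.NatCast

lemma induce_singleton_connected {V : Type*} (G : SimpleGraph V) (v : V) :
    (G.induce {v}).Connected := by
  rw [SimpleGraph.connected_iff]
  refine ⟨?_, ⟨⟨v, rfl⟩⟩⟩
  intro x y
  have : x = y := Subtype.ext (x.2.trans y.2.symm)
  rw [this]

lemma chain_connected {V : Type*} (G : SimpleGraph V) (f : ℕ → V) (a m : ℕ) (ham : a < m)
    (hadj : ∀ t, a ≤ t → t + 1 < m → G.Adj (f t) (f (t + 1))) :
    (G.induce (f '' Set.Ico a m)).Connected := by
  rw [SimpleGraph.connected_iff]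
  have hfa : f a ∈ f '' Set.Ico a m := ⟨a, ⟨le_refl a, ham⟩, rfl⟩
  suffices key : ∀ t, a ≤ t → t < m → ∀ x : (f '' Set.Ico a m : Set V),
      x.1 = f t → (G.induce (f '' Set.Ico a m)).Reachable ⟨f a, hfa⟩ x by
    refine ⟨?_, ⟨⟨f a, hfa⟩⟩⟩
    intro x y
    obtain ⟨s, hs, hxs⟩ := x.2
    obtain ⟨t, ht, hyt⟩ := y.2
    exact (key s hs.1 hs.2 x hxs.symm).symm.trans (key t ht.1 ht.2 y hyt.symm)
  intro t ht
  induction t, ht using Nat.le_induction with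
  | base =>
    intro _ x hx
    have : x = ⟨f a, hfa⟩ := Subtype.ext hx
    rw [this]
  | succ t ht ih =>
    intro h2 x hx
    have hmem : f t ∈ f '' Set.Ico a m := ⟨t, ⟨ht, by omega⟩, rfl⟩
    have r1 := ih (by omega) ⟨f t, hmem⟩ rfl
    have hstep : (G.induce (f '' Set.Ico a m)).Adj ⟨f t, hmem⟩ x := by
      have : G.Adj (f t) x.1 := hx ▸ hadj t ht h2
      exact this
    exact r1.trans hstep.reachable

lemma fin_add_val {n : ℕ} [NeZero n] (q : Fin n) (t : ℕ) :
    (q + (t : Fin n)).val = (q.val + t) % n := by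
  have h1 : (q + (t : Fin n)).val = (q.val + ((t : Fin n)).val) % n := by
    rw [Fin.add_def]
  rw [h1, Fin.val_natCast, Nat.add_mod_mod]

lemma dw_chord_minor (n : ℕ) [NeZero n] (hn : 6 ≤ n) (p : Fin n) (d : ℕ) (hd3 : 3 ≤ d) (hdn : d ≤ n - 2) :
    IsMinor K33v (DW n ⊔ SimpleGraph.fromEdgeSet {s(Sum.inl p, Sum.inl (p + (d : Fin n)))}) := by
  set G : SimpleGraph (Fin n ⊕ Fin 2) :=
    DW n ⊔ SimpleGraph.fromEdgeSet {s(Sum.inl p, Sum.inl (p + (d : Fin n)))} with hG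
  set g : ℕ → Fin n ⊕ Fin 2 := fun t => Sum.inl (p + (t : Fin n)) with hgdef
  have hval : ∀ t : ℕ, (p + (t : Fin n)).val = (p.val + t) % n := fun t => fin_add_val p t
  have ginj : ∀ s t, s < n → t < n → g s = g t → s = t := by
    intro s t hs ht hst
    have h1 : (p + (s : Fin n)) = (p + (t : Fin n)) := by
      simpa [hgdef] using hst
    have h2 : (p.val + s) % n = (p.val + t) % n := by
      rw [← hval s, ← hval t, h1]
    have h3 : s % n = t % n := Nat.ModEq.add_left_cancel' p.val h2
    rwa [Nat.mod_eq_of_lt hs, Nat.mod_eq_of_lt ht] at h3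
  have gne : ∀ s t, s < n → t < n → s ≠ t → g s ≠ g t := by
    intro s t hs ht hne heq
    exact hne (ginj s t hs ht heq)
  have gadj : ∀ s t, s < n → t < n → (s + 1) % n = t % n → s ≠ t → G.Adj (g s) (g t) := by
    intro s t hs ht hst hne
    refine Or.inl ?_
    rw [DW, SimpleGraph.fromRel_adj]
    refine ⟨by simpa [hgdef] using gne s t hs ht hne, Or.inl ?_⟩
    show ((p + (s : Fin n)).val + 1) % n = (p + (t : Fin n)).val
    rw [hval, hval, Nat.mod_add_mod, Nat.add_assoc]
    exact Nat.ModEq.add_left p.val hst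
  have hubl : ∀ (r : Fin 2) (q : Fin n), G.Adj (Sum.inr r) (Sum.inl q) := by
    intro r q
    refine Or.inl ?_
    rw [DW, SimpleGraph.fromRel_adj]
    exact ⟨by simp, Or.inl trivial⟩
  have hubhub : G.Adj (Sum.inr 0) (Sum.inr 1) := by
    refine Or.inl ?_
    rw [DW, SimpleGraph.fromRel_adj]
    exact ⟨by simp, Or.inl trivial⟩
  have hchord : G.Adj (g 0) (g d) := by
    refine Or.inr ?_
    rw [SimpleGraph.fromEdgeSet_adj]
    constructor
    · simp [hgdef]
    · exact gne 0 d (by omega) (by omega) (by omega)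
  -- membership helpers
  have hgr : ∀ (t : ℕ) (r : Fin 2), g t ≠ Sum.inr r := by intro t r; simp [hgdef]
  set φ : Fin 7 → Set (Fin n ⊕ Fin 2) :=
    ![{Sum.inr 0}, g '' {0}, g '' Set.Ico 2 d, {Sum.inr 1}, g '' {d}, g '' {1},
      g '' Set.Ico (d+1) n] with hφ
  have hφ0 : φ 0 = {Sum.inr 0} := rfl
  have hφ1 : φ 1 = g '' {0} := rfl
  have hφ2 : φ 2 = g '' Set.Ico 2 d := rfl
  have hφ3 : φ 3 = {Sum.inr 1} := rfl
  have hφ4 : φ 4 = g '' {d} := rfl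
  have hφ5 : φ 5 = g '' {1} := rfl
  have hφ6 : φ 6 = g '' Set.Ico (d+1) n := rfl
  refine ⟨φ, ?_, ?_, ?_, ?_⟩
  · intro x
    fin_cases x
    · exact ⟨Sum.inr 0, rfl⟩
    · exact ⟨g 0, ⟨0, rfl, rfl⟩⟩
    · exact ⟨g 2, ⟨2, ⟨le_refl _, by omega⟩, rfl⟩⟩
    · exact ⟨Sum.inr 1, rfl⟩
    · exact ⟨g d, ⟨d, rfl, rfl⟩⟩
    · exact ⟨g 1, ⟨1, rfl, rfl⟩⟩
    · exact ⟨g (d+1), ⟨d+1, ⟨le_refl _, by omega⟩, rfl⟩⟩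
  · have hchain : ∀ (a m : ℕ) (ham : a < m), m ≤ n →
        (G.induce (g '' Set.Ico a m)).Connected := by
      intro a m ham hmn
      refine chain_connected G g a m ham ?_
      intro t hat ht1
      exact gadj t (t+1) (by omega) (by omega)
        rfl (by omega)
    have hsing : ∀ t : ℕ, (G.induce (g '' {t})).Connected := by
      intro t
      rw [Set.image_singleton]
      exact induce_singleton_connected G _
    intro x
    fin_cases x
    · exact induce_singleton_connected G _
    · exact hsing 0
    · exact hchain 2 d (by omega) (by omega)
    · exact induce_singleton_connected G _
    · exact hsing d
    · exact hsing 1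
    · exact hchain (d+1) n (by omega) (le_refl n)
  · -- pairwise disjoint
    have gdisj : ∀ (S T : Set ℕ), (∀ s ∈ S, s < n) → (∀ t ∈ T, t < n) → (∀ s ∈ S, s ∉ T) →
        Disjoint (g '' S) (g '' T) := by
      intro S T hS hT hST
      rw [Set.disjoint_left]
      rintro x ⟨s, hs, rfl⟩ ⟨t, ht, hgt⟩
      have := ginj t s (hT t ht) (hS s hs) hgt
      exact hST s hs (this ▸ ht)
    have rdisj : ∀ (r : Fin 2) (S : Set ℕ), Disjoint ({Sum.inr r} : Set (Fin n ⊕ Fin 2)) (g '' S) := by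
      intro r S
      rw [Set.disjoint_left]
      rintro x rfl ⟨t, ht, hgt⟩
      exact hgr t r hgt
    have rrdisj : Disjoint ({Sum.inr 0} : Set (Fin n ⊕ Fin 2)) {Sum.inr 1} := by
      simp [Set.disjoint_left]
    intro x y hxy
    have hd2 : ∀ (S T : Set ℕ), (∀ s ∈ S, s < n) → (∀ t ∈ T, t < n) → (∀ s ∈ S, s ∉ T) →
        Disjoint (g '' T) (g '' S) := fun S T h1 h2 h3 => (gdisj S T h1 h2 h3).symm
    fin_cases x <;> fin_cases y <;>
      first
        | exact absurd rfl hxy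
        | exact rrdisj
        | exact rrdisj.symm
        | exact rdisj _ _
        | exact (rdisj _ _).symm
        | · apply gdisj <;>
              (intro s hs; simp only [Set.mem_singleton_iff, Set.mem_Ico] at *; omega)
  · -- edges
    have hsymm : ∀ x y : Fin 7, (∃ u ∈ φ x, ∃ w ∈ φ y, G.Adj u w) →
        (∃ u ∈ φ y, ∃ w ∈ φ x, G.Adj u w) := by
      rintro x y ⟨u, hu, w, hw, huw⟩
      exact ⟨w, hw, u, hu, huw.symm⟩
    intro x y hxy
    rw [K33v, SimpleGraph.fromEdgeSet_adj] at hxy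
    obtain ⟨hmem, -⟩ := hxy
    simp only [Set.mem_insert_iff, Set.mem_singleton_iff, Sym2.eq, Sym2.rel_iff',
      Prod.mk.injEq, Prod.swap_prod_mk] at hmem
    have m10 : g 0 ∈ φ 1 := ⟨0, rfl, rfl⟩
    have m51 : g 1 ∈ φ 5 := ⟨1, rfl, rfl⟩
    have m4d : g d ∈ φ 4 := ⟨d, rfl, rfl⟩
    have m22 : g 2 ∈ φ 2 := ⟨2, ⟨le_refl _, by omega⟩, rfl⟩
    have m2d1 : g (d-1) ∈ φ 2 := ⟨d-1, ⟨by omega, by omega⟩, rfl⟩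
    have m6d1 : g (d+1) ∈ φ 6 := ⟨d+1, ⟨le_refl _, by omega⟩, rfl⟩
    have m6n1 : g (n-1) ∈ φ 6 := ⟨n-1, ⟨by omega, by omega⟩, rfl⟩
    have m0 : Sum.inr 0 ∈ φ 0 := rfl
    have m3 : Sum.inr 1 ∈ φ 3 := rfl
    have e03 : ∃ u ∈ φ 0, ∃ w ∈ φ 3, G.Adj u w := ⟨_, m0, _, m3, hubhub⟩
    have e04 : ∃ u ∈ φ 0, ∃ w ∈ φ 4, G.Adj u w := ⟨_, m0, _, m4d, hubl 0 _⟩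
    have e05 : ∃ u ∈ φ 0, ∃ w ∈ φ 5, G.Adj u w := ⟨_, m0, _, m51, hubl 0 _⟩
    have e06 : ∃ u ∈ φ 0, ∃ w ∈ φ 6, G.Adj u w := ⟨_, m0, _, m6d1, hubl 0 _⟩
    have e13 : ∃ u ∈ φ 1, ∃ w ∈ φ 3, G.Adj u w := ⟨_, m10, _, m3, (hubl 1 _).symm⟩
    have e14 : ∃ u ∈ φ 1, ∃ w ∈ φ 4, G.Adj u w := ⟨_, m10, _, m4d, hchord⟩
    have e15 : ∃ u ∈ φ 1, ∃ w ∈ φ 5, G.Adj u w :=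
      ⟨_, m10, _, m51, gadj 0 1 (by omega) (by omega) rfl (by omega)⟩
    have e16 : ∃ u ∈ φ 1, ∃ w ∈ φ 6, G.Adj u w :=
      ⟨_, m10, _, m6n1, (gadj (n-1) 0 (by omega) (by omega)
        (by rw [Nat.sub_add_cancel (by omega), Nat.mod_self, Nat.zero_mod]) (by omega)).symm⟩
    have e23 : ∃ u ∈ φ 2, ∃ w ∈ φ 3, G.Adj u w := ⟨_, m22, _, m3, (hubl 1 _).symm⟩
    have e24 : ∃ u ∈ φ 2, ∃ w ∈ φ 4, G.Adj u w :=
      ⟨_, m2d1, _, m4d, gadj (d-1) d (by omega) (by omega)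
        (by rw [show d - 1 + 1 = d from by omega]) (by omega)⟩
    have e25 : ∃ u ∈ φ 2, ∃ w ∈ φ 5, G.Adj u w :=
      ⟨_, m22, _, m51, (gadj 1 2 (by omega) (by omega) rfl (by omega)).symm⟩
    have e60 : ∃ u ∈ φ 6, ∃ w ∈ φ 0, G.Adj u w := hsymm 0 6 e06
    have e63 : ∃ u ∈ φ 6, ∃ w ∈ φ 3, G.Adj u w := ⟨_, m6d1, _, m3, (hubl 1 _).symm⟩
    have e61 : ∃ u ∈ φ 6, ∃ w ∈ φ 1, G.Adj u w := hsymm 1 6 e16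
    have e64 : ∃ u ∈ φ 6, ∃ w ∈ φ 4, G.Adj u w :=
      ⟨_, m6d1, _, m4d, (gadj d (d+1) (by omega) (by omega) rfl (by omega)).symm⟩
    rcases hmem with (⟨rfl,rfl⟩|⟨rfl,rfl⟩)|(⟨rfl,rfl⟩|⟨rfl,rfl⟩)|(⟨rfl,rfl⟩|⟨rfl,rfl⟩)|
      (⟨rfl,rfl⟩|⟨rfl,rfl⟩)|(⟨rfl,rfl⟩|⟨rfl,rfl⟩)|(⟨rfl,rfl⟩|⟨rfl,rfl⟩)|
      (⟨rfl,rfl⟩|⟨rfl,rfl⟩)|(⟨rfl,rfl⟩|⟨rfl,rfl⟩)|(⟨rfl,rfl⟩|⟨rfl,rfl⟩)|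
      (⟨rfl,rfl⟩|⟨rfl,rfl⟩)|(⟨rfl,rfl⟩|⟨rfl,rfl⟩)|(⟨rfl,rfl⟩|⟨rfl,rfl⟩)|(⟨rfl,rfl⟩|⟨rfl,rfl⟩)
    · exact e03
    · exact hsymm 0 3 e03
    · exact e04
    · exact hsymm 0 4 e04
    · exact e05
    · exact hsymm 0 5 e05
    · exact e13
    · exact hsymm 1 3 e13
    · exact e14
    · exact hsymm 1 4 e14
    · exact e15
    · exact hsymm 1 5 e15
    · exact e23
    · exact hsymm 2 3 e23
    · exact e24
    · exact hsymm 2 4 e24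
    · exact e25
    · exact hsymm 2 5 e25
    · exact e60
    · exact hsymm 6 0 e60
    · exact e63
    · exact hsymm 6 3 e63
    · exact e61
    · exact hsymm 6 1 e61
    · exact e64
    · exact hsymm 6 4 e64

/-- For every `n ≥ 6`, every graph obtained from `DWₙ` by adding a single new
edge contains `K₃,₃ + v` as a minor. -/
theorem stmt_14 (n : ℕ) (hn : 6 ≤ n) (u w : Fin n ⊕ Fin 2) (hne : u ≠ w)
    (h : ¬ (DW n).Adj u w) :
    IsMinor K33v (DW n ⊔ SimpleGraph.fromEdgeSet {s(u, w)}) := by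
  haveI : NeZero n := ⟨by omega⟩
  have hDW_inr : ∀ (r : Fin 2) (x : Fin n ⊕ Fin 2), Sum.inr r ≠ x → (DW n).Adj (Sum.inr r) x := by
    intro r x hrx
    rw [DW, SimpleGraph.fromRel_adj]
    refine ⟨hrx, Or.inl ?_⟩
    cases x with
    | inl q => trivial
    | inr q => trivial
  obtain ⟨i, rfl⟩ : ∃ i, u = Sum.inl i := by
    cases u with
    | inl i => exact ⟨i, rfl⟩
    | inr r => exact absurd (hDW_inr r w hne) h
  obtain ⟨j, rfl⟩ : ∃ j, w = Sum.inl j := by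
    cases w with
    | inl j => exact ⟨j, rfl⟩
    | inr r => exact absurd (hDW_inr r (Sum.inl i) (fun hc => hne hc.symm)).symm h
  have hij : i ≠ j := fun hc => hne (by rw [hc])
  have hni : ¬ ((i.val + 1) % n = j.val) := by
    intro hc
    apply h
    rw [DW, SimpleGraph.fromRel_adj]
    exact ⟨by simpa using hij, Or.inl hc⟩
  have hnj : ¬ ((j.val + 1) % n = i.val) := by
    intro hc
    apply h
    rw [DW, SimpleGraph.fromRel_adj]
    exact ⟨by simpa using hij, Or.inr hc⟩
  have hi : i.val < n := i.isLt
  have hj : j.val < n := j.isLt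
  set d : ℕ := (j.val + (n - i.val)) % n with hd
  have hdlt : d < n := Nat.mod_lt _ (by omega)
  have hjd : (i.val + d) % n = j.val := by
    rw [hd, Nat.add_mod_mod, show i.val + (j.val + (n - i.val)) = j.val + n from by omega,
      Nat.add_mod_right, Nat.mod_eq_of_lt hj]
  have hd0 : d ≠ 0 := by
    intro hc
    rw [hc, Nat.add_zero, Nat.mod_eq_of_lt hi] at hjd
    exact hij (Fin.ext hjd)
  have hd1 : d ≠ 1 := by
    intro hc
    rw [hc] at hjd
    exact hni hjd
  have hdn1 : d ≠ n - 1 := by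
    intro hc
    apply hnj
    rw [← hjd, Nat.mod_add_mod, hc, show i.val + (n - 1) + 1 = i.val + n from by omega,
      Nat.add_mod_right, Nat.mod_eq_of_lt hi]
  have hij_fin : i + (d : Fin n) = j := by
    apply Fin.ext
    rw [fin_add_val, hjd]
  rcases Nat.lt_or_ge d 3 with hd3 | hd3
  · -- d = 2; use base j with gap n - 2
    have hd2 : d = 2 := by omega
    have hji_fin : j + ((n - 2 : ℕ) : Fin n) = i := by
      apply Fin.ext
      rw [fin_add_val, ← hjd, hd2, Nat.mod_add_mod,
        show i.val + 2 + (n - 2) = i.val + n from by omega,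
        Nat.add_mod_right, Nat.mod_eq_of_lt hi]
    have := dw_chord_minor n hn j (n - 2) (by omega) (le_refl _)
    rw [hji_fin] at this
    rwa [show s(Sum.inl i, Sum.inl j) = s(Sum.inl j, Sum.inl i) from Sym2.eq_swap]
  · have := dw_chord_minor n hn i d hd3 (by omega)
    rwa [hij_fin] at this
end
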